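/- arXiv:2212.13628 — 3 statements merged into one kernel-verified Lean document; each statement's English description precedes it below -/
import Mathlib

section
/- Basis theorem for signature functionals at the horizon. Fix T > 0 and an integer K ≥ 1. Consider the signature functionals S_α restricted to Lipschitz paths of length exactly T. Then the family consisting of the constant functional 1 together with {S_{β1} : β a word over {0,1} with |β| < K} (words obtained by appending the letter 1 to a word of length < K) is a basis of the linear span of {S_α : α a word with |α| ≤ K}: every S_α with |α| ≤ K equals c_0·1 + Σ_{|β|<K} c_β S_{β1} on all Lipschitz paths of length T for unique real coefficients, and this family is linearly independent as functionals on Lipschitz paths of length T. -/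
/-!
Integrating by parts gives the shuffle identity `u S_w(u) = ∑ S_{w'}(u)`, the sum running over
the `|w| + 1` ways of inserting a letter `0` into `w`. At the horizon `u = T` the left side is a
multiple of `S_w(T)`, so for `w = v 1 0^p` the identity expresses `S_{v 1 0^(p+1)}` through words
with only `p` trailing zeros; induction on `p` reduces every word to the words ending in `1`, and
`S_{0^n}(T) = T^n / n!` is constant.

For independence, let `∑_{|w| ≤ k} d_w S_w(Y_t)` vanish for all Lipschitz paths and all
`t ∈ (0, T)`. At `t = 0` only the empty word survives, so `d_∅ = 0`. Differentiating in `t` at `τ`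
along a path continued with slope `σ` after `τ` gives `U(τ) + σ V(τ) = 0`, where `U` and `V` are
the combinations of the words ending in `0` and in `1` with that letter removed; hence both vanish
and induction on `k` applies. A combination of the words ending in `1` does not change when the path
is frozen after time `t`, so vanishing at the horizon `T` implies vanishing at every `t ≤ T`.
-/

open Filter Set Topology MeasureTheory

noncomputable section

/-- Iterated Riemann–Stieltjes signature integral of a (Lipschitz) path `y`, recursing on
the *last* letter of the word (the word is given in reversed order):
`dy^0_s = ds` (letter `false`) and `dy^1_s = y'(s) ds` (letter `true`). -/
noncomputable def sigLAux (y : ℝ → ℝ) : List Bool → ℝ → ℝ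
  | [], _ => 1
  | a :: rest, u => ∫ s in (0:ℝ)..u, sigLAux y rest s * (if a then deriv y s else 1)

/-- The signature functional `S_α(Y_u)` of the time-augmented Lipschitz path `y` on `[0,u]`. -/
noncomputable def sigL (α : List Bool) (y : ℝ → ℝ) (u : ℝ) : ℝ := sigLAux y α.reverse u
/-- A globally Lipschitz function, encoding a Lipschitz path. -/
def IsLip (y : ℝ → ℝ) : Prop := ∃ C : NNReal, LipschitzWith C y

theorem List.insertIdx_replicate_append {α : Type*} (a : α) (l : List α) {p i : ℕ} (hi : i ≤ p) :
    (List.replicate p a ++ l).insertIdx i a = List.replicate (p + 1) a ++ l := by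
  induction p generalizing i with
  | zero => simp [Nat.le_zero.1 hi]
  | succ p ih =>
    cases i with
    | zero => simp [List.replicate_succ]
    | succ i =>
      rw [List.replicate_succ, List.cons_append, List.insertIdx_succ_cons, ih (by omega),
        List.replicate_succ (a := a) (n := p + 1), List.cons_append]

theorem List.insertIdx_length_add_append {α : Type*} (x : α) (l₁ l₂ : List α) (n : ℕ) :
    (l₁ ++ l₂).insertIdx (l₁.length + n) x = l₁ ++ l₂.insertIdx n x := by
  induction l₁ with
  | nil => simp
  | cons a l₁ ih => rw [List.length_cons, Nat.add_right_comm, List.cons_append,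
      List.insertIdx_succ_cons, ih, List.cons_append]

theorem List.eq_replicate_false_or_eq_replicate_false_append (L : List Bool) :
    (∃ n, L = List.replicate n false) ∨ ∃ p R, L = List.replicate p false ++ true :: R := by
  induction L with
  | nil => exact Or.inl ⟨0, rfl⟩
  | cons a L ih =>
    cases a with
    | true => exact Or.inr ⟨0, L, rfl⟩
    | false =>
      rcases ih with ⟨n, rfl⟩ | ⟨p, R, rfl⟩
      · exact Or.inl ⟨n + 1, rfl⟩
      · exact Or.inr ⟨p + 1, R, rfl⟩

def words (α : Type*) [Fintype α] (n : ℕ) : Finset (List α) :=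
  (Finset.univ : Finset (Fin n → α)).map ⟨List.ofFn, List.ofFn_injective⟩

section Words

variable {α M : Type*} [Fintype α] [AddCommMonoid M]

theorem mem_words {n : ℕ} {L : List α} : L ∈ words α n ↔ L.length = n := by
  refine ⟨fun h => ?_, fun h => ?_⟩
  · obtain ⟨v, -, rfl⟩ := Finset.mem_map.1 h
    exact List.length_ofFn
  · subst h
    exact Finset.mem_map.2 ⟨L.get, Finset.mem_univ _, List.ofFn_get L⟩

theorem sum_ofFn_eq_sum_words (n : ℕ) (g : List α → M) :
    ∑ v : Fin n → α, g (List.ofFn v) = ∑ L ∈ words α n, g L := by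
  rw [words, Finset.sum_map]
  rfl

theorem sum_words_succ (n : ℕ) (g : List α → M) :
    ∑ L ∈ words α (n + 1), g L = ∑ a : α, ∑ L ∈ words α n, g (a :: L) := by
  simp only [← sum_ofFn_eq_sum_words, ← Fintype.sum_prod_type']
  exact Fintype.sum_equiv (Fin.consEquiv fun _ => α).symm _ _ fun v => by rw [List.ofFn_succ]; rfl

theorem sum_words_reverse (n : ℕ) (g : List α → M) :
    ∑ L ∈ words α n, g L.reverse = ∑ L ∈ words α n, g L :=
  Finset.sum_nbij' List.reverse List.reverse (by simp [mem_words]) (by simp [mem_words])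
    (by simp) (by simp) (by simp)

theorem sum_words_zero (g : List α → M) :
    ∑ L ∈ words α 0, g L = g [] := by
  simp [← sum_ofFn_eq_sum_words]

end Words

theorem mul_integral_eq_integral_primitive_add {h : ℝ → ℝ} {u : ℝ}
    (hh : IntervalIntegrable h volume 0 u) :
    u * ∫ s in (0:ℝ)..u, h s
      = (∫ s in (0:ℝ)..u, ∫ t in (0:ℝ)..s, h t) + ∫ s in (0:ℝ)..u, s * h s := by
  have hH := hh.absolutelyContinuousOnInterval_intervalIntegral left_mem_uIcc
  have hid : AbsolutelyContinuousOnInterval id 0 u :=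
    (LipschitzWith.id.lipschitzOnWith).absolutelyContinuousOnInterval
  have hderiv : ∫ s in (0:ℝ)..u, s * deriv (fun x => ∫ t in (0:ℝ)..x, h t) s
      = ∫ s in (0:ℝ)..u, s * h s := by
    refine intervalIntegral.integral_congr_ae ?_
    filter_upwards [hh.ae_hasDerivAt_integral] with s hs hsu
    rw [(hs (uIoc_subset_uIcc hsu) 0 left_mem_uIcc).deriv]
  have := hid.integral_mul_deriv_eq_deriv_mul hH
  simp only [id, deriv_id', one_mul, zero_mul, intervalIntegral.integral_same, sub_zero] at this
  rw [hderiv] at this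
  linarith

theorem eq_zero_of_forall_intervalIntegral_eq_zero {h : ℝ → ℝ} (hh : Continuous h) {a b : ℝ}
    (hab : a < b) (H : ∀ t ∈ Icc a b, ∫ s in a..t, h s = 0) : h a = 0 := by
  have hderiv : HasDerivWithinAt (fun t => ∫ s in a..t, h s) (h a) (Icc a b) a :=
    (hh.integral_hasStrictDerivAt a a).hasDerivAt.hasDerivWithinAt
  have hzero : HasDerivWithinAt (fun t => ∫ s in a..t, h s) 0 (Icc a b) a :=
    (hasDerivWithinAt_const a _ 0).congr H (H a (left_mem_Icc.2 hab.le))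
  exact (uniqueDiffOn_Icc hab a (left_mem_Icc.2 hab.le)).eq_deriv _ hderiv hzero

theorem IsLip.locallyIntegrable_deriv {y : ℝ → ℝ} (hy : IsLip y) :
    LocallyIntegrable (deriv y) volume := by
  obtain ⟨C, hC⟩ := hy
  refine (locallyIntegrable_const (C : ℝ)).mono (measurable_deriv y).aestronglyMeasurable
    (ae_of_all _ fun s => ?_)
  simpa using norm_deriv_le_of_lipschitz hC

def augDeriv (y : ℝ → ℝ) (a : Bool) (s : ℝ) : ℝ := if a then deriv y s else 1

theorem sigLAux_cons (y : ℝ → ℝ) (a : Bool) (r : List Bool) (u : ℝ) :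
    sigLAux y (a :: r) u = ∫ s in (0:ℝ)..u, sigLAux y r s * augDeriv y a s := rfl

theorem sigL_append_singleton (β : List Bool) (a : Bool) (y : ℝ → ℝ) (t : ℝ) :
    sigL (β ++ [a]) y t = sigLAux y (a :: β.reverse) t := by
  rw [sigL, List.reverse_append]
  rfl

theorem sigLAux_replicate_false (y : ℝ → ℝ) (n : ℕ) (u : ℝ) :
    sigLAux y (List.replicate n false) u = u ^ n / n.factorial := by
  induction n generalizing u with
  | zero => simp [sigLAux]
  | succ n ih =>
    simp only [List.replicate_succ, sigLAux_cons, ih, augDeriv, Bool.false_eq_true, if_false,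
      mul_one, intervalIntegral.integral_div, integral_pow, Nat.factorial_succ]
    push_cast
    field_simp
    ring

section Signature

variable {y : ℝ → ℝ}

theorem locallyIntegrable_augDeriv (hy : LocallyIntegrable (deriv y) volume) (a : Bool) :
    LocallyIntegrable (augDeriv y a) volume := by
  cases a
  · exact locallyIntegrable_const 1
  · exact hy

theorem intervalIntegrable_mul_augDeriv (hy : LocallyIntegrable (deriv y) volume) {g : ℝ → ℝ}
    (hg : Continuous g) (a : Bool) (p q : ℝ) :
    IntervalIntegrable (fun s => g s * augDeriv y a s) volume p q :=
  (((locallyIntegrable_augDeriv hy a).continuous_mul hg).integrableOn_isCompact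
    isCompact_uIcc).intervalIntegrable

theorem continuous_sigLAux (hy : LocallyIntegrable (deriv y) volume) (L : List Bool) :
    Continuous (sigLAux y L) := by
  induction L with
  | nil => exact continuous_const
  | cons a r ih =>
    exact intervalIntegral.continuous_primitive (intervalIntegrable_mul_augDeriv hy ih a) 0

theorem intervalIntegrable_sigLAux_mul (hy : LocallyIntegrable (deriv y) volume) (r : List Bool)
    (a : Bool) (p q : ℝ) :
    IntervalIntegrable (fun s => sigLAux y r s * augDeriv y a s) volume p q :=
  intervalIntegrable_mul_augDeriv hy (continuous_sigLAux hy r) a p q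

theorem mul_sigLAux_eq_sum_insertIdx (hy : LocallyIntegrable (deriv y) volume)
    (L : List Bool) (u : ℝ) :
    u * sigLAux y L u = ∑ i ∈ Finset.range (L.length + 1), sigLAux y (L.insertIdx i false) u := by
  induction L generalizing u with
  | nil => simp [sigLAux_cons, sigLAux, augDeriv]
  | cons a r ih =>
    have hsum : ∫ s in (0:ℝ)..u, s * (sigLAux y r s * augDeriv y a s)
        = ∑ i ∈ Finset.range (r.length + 1), sigLAux y (a :: r.insertIdx i false) u := by
      simp only [sigLAux_cons, ← mul_assoc, ih, Finset.sum_mul]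
      exact intervalIntegral.integral_finsetSum fun i _ =>
        intervalIntegrable_sigLAux_mul hy _ a 0 u
    have hprimitive : ∫ s in (0:ℝ)..u, ∫ t in (0:ℝ)..s, sigLAux y r t * augDeriv y a t
        = sigLAux y (false :: a :: r) u := by
      simp [sigLAux_cons _ false, augDeriv, sigLAux_cons _ a]
    rw [List.length_cons, Finset.sum_range_succ', List.insertIdx_zero, sigLAux_cons y a r,
      mul_integral_eq_integral_primitive_add (intervalIntegrable_sigLAux_mul hy r a 0 u), hsum,
      hprimitive, add_comm]
    simp only [List.insertIdx_succ_cons]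

/-- The shuffle identity at `M = 0ᵖ1R` solved for `0ᵖ⁺¹1R`, i.e. (reversing) for the word
`R⁻¹ 1 0ᵖ⁺¹`: the other words it involves have only `p` trailing zeros. -/
theorem sigLAux_replicate_succ_append (hy : LocallyIntegrable (deriv y) volume)
    (p : ℕ) (R : List Bool) (T : ℝ) :
    sigLAux y (List.replicate (p + 1) false ++ true :: R) T
      = ((p : ℝ) + 1)⁻¹ * (T * sigLAux y (List.replicate p false ++ true :: R) T
        - ∑ j ∈ Finset.range (R.length + 1),
            sigLAux y (List.replicate p false ++ true :: R.insertIdx j false) T) := by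
  have hshuffle := mul_sigLAux_eq_sum_insertIdx hy (List.replicate p false ++ true :: R) T
  have hlen : (List.replicate p false ++ true :: R).length + 1 = (p + 1) + (R.length + 1) := by
    simp only [List.length_append, List.length_replicate, List.length_cons]
    ring
  have hshift : ∀ j, (List.replicate p false ++ true :: R).insertIdx (p + 1 + j) false
      = List.replicate p false ++ true :: R.insertIdx j false := fun j => by
    simpa using List.insertIdx_length_add_append false (List.replicate p false ++ [true]) R j
  rw [hlen, Finset.sum_range_add, Finset.sum_congr rfl fun i hi =>
    congrArg (sigLAux y · T) (List.insertIdx_replicate_append false (true :: R)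
      (Nat.lt_succ_iff.1 (Finset.mem_range.1 hi)))] at hshuffle
  simp only [Finset.sum_const, Finset.card_range, nsmul_eq_mul, hshift] at hshuffle
  field_simp
  push_cast at hshuffle
  linarith

end Signature

theorem sigLAux_congr_of_eqOn_deriv {y z : ℝ → ℝ} {τ : ℝ}
    (h : EqOn (deriv y) (deriv z) (Ioo 0 τ)) (L : List Bool) {u : ℝ} (hu : u ∈ Icc 0 τ) :
    sigLAux y L u = sigLAux z L u := by
  induction L generalizing u with
  | nil => rfl
  | cons a r ih =>
    refine intervalIntegral.integral_congr_ae ?_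
    filter_upwards [volume.ae_ne τ] with s hsτ hs
    rw [uIoc_of_le hu.1] at hs
    have hsu : s ∈ Icc 0 τ := ⟨hs.1.le, hs.2.trans hu.2⟩
    cases a with
    | false => simp [ih hsu]
    | true => simp only [if_true, ih hsu, h ⟨hs.1, hsu.2.lt_of_ne hsτ⟩]

theorem sigLAux_true_cons_eq_of_deriv_eq_zero {z : ℝ → ℝ}
    (hz : LocallyIntegrable (deriv z) volume) {t T : ℝ} (h : ∀ s ∈ uIoc t T, deriv z s = 0)
    (r : List Bool) : sigLAux z (true :: r) T = sigLAux z (true :: r) t := by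
  rw [sigLAux_cons, sigLAux_cons, ← intervalIntegral.integral_add_adjacent_intervals
    (intervalIntegrable_sigLAux_mul hz r true 0 t) (intervalIntegrable_sigLAux_mul hz r true t T),
    intervalIntegral.integral_zero_ae (a := t) (b := T)
      (ae_of_all _ fun s hs => by simp [augDeriv, h s hs]),
    add_zero]

def extPath (y : ℝ → ℝ) (τ σ : ℝ) : ℝ → ℝ := fun s => y (min s τ) + σ * (max s τ - τ)

section ExtPath

variable {y : ℝ → ℝ} {τ σ s : ℝ}

theorem IsLip.extPath (hy : IsLip y) (τ σ : ℝ) : IsLip (extPath y τ σ) := by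
  obtain ⟨C, hC⟩ := hy
  exact ⟨_, (hC.comp (LipschitzWith.id.min_const τ)).add
    ((lipschitzWith_smul σ).comp ((LipschitzWith.id.max_const τ).sub (LipschitzWith.const τ)))⟩

theorem deriv_extPath_of_lt (hs : s < τ) : deriv (extPath y τ σ) s = deriv y s :=
  Filter.EventuallyEq.deriv_eq (by
    filter_upwards [Iio_mem_nhds hs] with t ht
    simp [extPath, min_eq_left (mem_Iio.1 ht).le, max_eq_right (mem_Iio.1 ht).le])

theorem deriv_extPath_of_gt (hs : τ < s) : deriv (extPath y τ σ) s = σ := by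
  have haff : HasDerivAt (fun t => y τ + σ * (t - τ)) σ s := by
    simpa using (((hasDerivAt_id s).sub_const τ).const_mul σ).const_add (y τ)
  refine (haff.congr_of_eventuallyEq ?_).deriv
  filter_upwards [Ioi_mem_nhds hs] with t ht
  simp [extPath, min_eq_right (mem_Ioi.1 ht).le, max_eq_left (mem_Ioi.1 ht).le]

theorem sigLAux_extPath_of_mem_Icc (L : List Bool) {u : ℝ} (hu : u ∈ Icc 0 τ) :
    sigLAux (extPath y τ σ) L u = sigLAux y L u :=
  sigLAux_congr_of_eqOn_deriv (fun _ hs => deriv_extPath_of_lt hs.2) L hu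

end ExtPath

def basisComb (K : ℕ) (T c0 : ℝ) (c : List Bool → ℝ) (y : ℝ → ℝ) : ℝ :=
  c0 + ∑ n ∈ Finset.range K, ∑ v : Fin n → Bool, c (List.ofFn v) * sigL (List.ofFn v ++ [true]) y T

section BasisComb

variable (K : ℕ) (T : ℝ) (y : ℝ → ℝ) (c0 d0 : ℝ) (c d : List Bool → ℝ)

theorem basisComb_add :
    basisComb K T (c0 + d0) (c + d) y = basisComb K T c0 c y + basisComb K T d0 d y := by
  simp only [basisComb, Pi.add_apply, add_mul, Finset.sum_add_distrib]
  ring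

theorem basisComb_smul (r : ℝ) :
    basisComb K T (r * c0) (r • c) y = r * basisComb K T c0 c y := by
  simp only [basisComb, Pi.smul_apply, smul_eq_mul, mul_add, Finset.mul_sum, mul_assoc]

theorem basisComb_sub :
    basisComb K T (c0 - d0) (c - d) y = basisComb K T c0 c y - basisComb K T d0 d y := by
  simp only [basisComb, Pi.sub_apply, sub_mul, Finset.sum_sub_distrib]
  ring

end BasisComb

def horizonSpan (K : ℕ) (T : ℝ) : Submodule ℝ ((ℝ → ℝ) → ℝ) where
  carrier := {φ | ∃ c0 c, ∀ y, IsLip y → φ y = basisComb K T c0 c y}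
  add_mem' := by
    rintro φ ψ ⟨c0, c, hφ⟩ ⟨d0, d, hψ⟩
    exact ⟨c0 + d0, c + d, fun y hy => by simp [hφ y hy, hψ y hy, basisComb_add]⟩
  zero_mem' := ⟨0, 0, fun y _ => by simp [basisComb]⟩
  smul_mem' := by
    rintro r φ ⟨c0, c, hφ⟩
    exact ⟨r * c0, r • c, fun y hy => by simp [hφ y hy, basisComb_smul]⟩

section HorizonSpan

variable {K : ℕ} {T : ℝ}

theorem horizonSpan.mem_of_eqOn_lip {φ ψ : (ℝ → ℝ) → ℝ} (hψ : ψ ∈ horizonSpan K T)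
    (h : ∀ y, IsLip y → φ y = ψ y) : φ ∈ horizonSpan K T := by
  obtain ⟨c0, c, hc⟩ := hψ
  exact ⟨c0, c, fun y hy => (h y hy).trans (hc y hy)⟩

theorem horizonSpan.const_mem (r : ℝ) : (fun _ => r) ∈ horizonSpan K T :=
  ⟨r, 0, fun y _ => by simp [basisComb]⟩

theorem sigLAux_true_cons_mem_horizonSpan {M : List Bool} (hM : M.length < K) :
    (fun y => sigLAux y (true :: M) T) ∈ horizonSpan K T := by
  refine ⟨0, fun L => if L = M.reverse then 1 else 0, fun y _ => ?_⟩
  rw [basisComb, zero_add, Finset.sum_congr rfl fun n _ => sum_ofFn_eq_sum_words n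
    fun L => (if L = M.reverse then (1 : ℝ) else 0) * sigL (L ++ [true]) y T]
  simp only [boole_mul, Finset.sum_ite_eq', mem_words, List.length_reverse, Finset.sum_ite_eq,
    Finset.mem_range, hM, if_true, sigL_append_singleton, List.reverse_reverse]

theorem sigLAux_replicate_append_mem_horizonSpan (p : ℕ) :
    ∀ R : List Bool, p + 1 + R.length ≤ K →
      (fun y => sigLAux y (List.replicate p false ++ true :: R) T) ∈ horizonSpan K T := by
  induction p with
  | zero => exact fun R hR => sigLAux_true_cons_mem_horizonSpan (by omega)
  | succ p ih =>
    intro R hR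
    have hsum : (∑ j ∈ Finset.range (R.length + 1),
        fun y => sigLAux y (List.replicate p false ++ true :: R.insertIdx j false) T)
          ∈ horizonSpan K T :=
      Submodule.sum_mem _ fun j hj => ih _ (by
        rw [List.length_insertIdx_of_le_length (Nat.lt_succ_iff.1 (Finset.mem_range.1 hj))]
        omega)
    refine horizonSpan.mem_of_eqOn_lip (Submodule.smul_mem _ ((p : ℝ) + 1)⁻¹
      (Submodule.sub_mem _ (Submodule.smul_mem _ T (ih R (by omega))) hsum)) fun y hy => ?_
    simp only [Pi.smul_apply, Pi.sub_apply, Finset.sum_apply, smul_eq_mul]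
    exact sigLAux_replicate_succ_append hy.locallyIntegrable_deriv p R T

theorem sigLAux_mem_horizonSpan {L : List Bool} (hL : L.length ≤ K) :
    (fun y => sigLAux y L T) ∈ horizonSpan K T := by
  rcases L.eq_replicate_false_or_eq_replicate_false_append with ⟨n, rfl⟩ | ⟨p, R, rfl⟩
  · exact horizonSpan.mem_of_eqOn_lip (horizonSpan.const_mem (T ^ n / n.factorial))
      fun y _ => sigLAux_replicate_false y n T
  · refine sigLAux_replicate_append_mem_horizonSpan p R ?_
    simp only [List.length_append, List.length_replicate, List.length_cons] at hL
    omega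

end HorizonSpan

def sigComb (d : List Bool → ℝ) (k : ℕ) (y : ℝ → ℝ) (t : ℝ) : ℝ :=
  ∑ n ∈ Finset.range (k + 1), ∑ L ∈ words Bool n, d L * sigLAux y L t

section SigComb

variable {y : ℝ → ℝ} (d : List Bool → ℝ) (k : ℕ)

theorem continuous_sigComb (hy : LocallyIntegrable (deriv y) volume) :
    Continuous (sigComb d k y) :=
  continuous_finsetSum _ fun _ _ => continuous_finsetSum _ fun L _ =>
    continuous_const.mul (continuous_sigLAux hy L)

theorem sigComb_at_zero : sigComb d k y 0 = d [] := by
  simp [sigComb, Finset.sum_range_succ', sum_words_succ, sum_words_zero, sigLAux]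

theorem integral_sigComb_mul_augDeriv (hy : LocallyIntegrable (deriv y) volume) (a : Bool)
    (t : ℝ) : ∫ s in (0:ℝ)..t, sigComb d k y s * augDeriv y a s
      = ∑ n ∈ Finset.range (k + 1), ∑ L ∈ words Bool n, d L * sigLAux y (a :: L) t := by
  simp only [sigComb, Finset.sum_mul]
  rw [intervalIntegral.integral_finsetSum fun n _ => by
    simpa only [Finset.sum_mul] using intervalIntegrable_mul_augDeriv hy
      (g := fun s => ∑ L ∈ words Bool n, d L * sigLAux y L s)
      (continuous_finsetSum _ fun L _ => continuous_const.mul (continuous_sigLAux hy L)) a 0 t]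
  refine Finset.sum_congr rfl fun n _ => ?_
  simp only [mul_assoc]
  rw [intervalIntegral.integral_finsetSum fun L _ =>
    (intervalIntegrable_sigLAux_mul hy L a 0 t).const_mul (d L)]
  simp only [intervalIntegral.integral_const_mul, sigLAux_cons]

theorem sigComb_succ (hy : LocallyIntegrable (deriv y) volume) (t : ℝ) :
    sigComb d (k + 1) y t = d [] + ∫ s in (0:ℝ)..t,
      (sigComb (fun L => d (false :: L)) k y s
        + sigComb (fun L => d (true :: L)) k y s * deriv y s) := by
  have hfalse := integral_sigComb_mul_augDeriv (fun L => d (false :: L)) k hy false t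
  have htrue := integral_sigComb_mul_augDeriv (fun L => d (true :: L)) k hy true t
  simp only [augDeriv, Bool.false_eq_true, if_false, if_true, mul_one] at hfalse htrue
  rw [intervalIntegral.integral_add ((continuous_sigComb _ k hy).intervalIntegrable 0 t)
    (by simpa only [augDeriv, if_true] using
      intervalIntegrable_mul_augDeriv hy (continuous_sigComb _ k hy) true 0 t), hfalse, htrue,
    sigComb, Finset.sum_range_succ', sum_words_zero]
  simp only [sum_words_succ, Fintype.sum_bool, Finset.sum_add_distrib, sigLAux]
  ring

end SigComb

section Independence

variable {T : ℝ} {d : List Bool → ℝ} {k : ℕ}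

theorem coeff_nil_eq_zero_of_sigComb_eq_zero (hT : 0 < T)
    (h : ∀ y, IsLip y → EqOn (sigComb d k y) 0 (Ioo 0 T)) : d [] = 0 := by
  have hzero : IsLip (fun _ => (0 : ℝ)) := ⟨0, LipschitzWith.const 0⟩
  rw [← sigComb_at_zero d k (y := fun _ => 0)]
  exact (h _ hzero).closure (continuous_sigComb d k hzero.locallyIntegrable_deriv) continuous_const
    (by rw [closure_Ioo hT.ne]; exact left_mem_Icc.2 hT.le)

theorem sigComb_cons_eqOn_zero (hT : 0 < T)
    (h : ∀ y, IsLip y → EqOn (sigComb d (k + 1) y) 0 (Ioo 0 T)) {y : ℝ → ℝ} (hy : IsLip y) :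
    EqOn (sigComb (fun L => d (false :: L)) k y) 0 (Ioo 0 T) ∧
      EqOn (sigComb (fun L => d (true :: L)) k y) 0 (Ioo 0 T) := by
  have hd0 : d [] = 0 := coeff_nil_eq_zero_of_sigComb_eq_zero hT h
  have key : ∀ τ ∈ Ioo 0 T, ∀ σ : ℝ,
      sigComb (fun L => d (false :: L)) k y τ + sigComb (fun L => d (true :: L)) k y τ * σ = 0 := by
    intro τ hτ σ
    have hz := (hy.extPath τ σ).locallyIntegrable_deriv
    set z := extPath y τ σ
    set G := fun s =>
      sigComb (fun L => d (false :: L)) k z s + sigComb (fun L => d (true :: L)) k z s * deriv z s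
    have hGint : ∀ t, IntervalIntegrable G volume 0 t := fun t =>
      ((continuous_sigComb _ k hz).intervalIntegrable 0 t).add (by
        simpa only [augDeriv, if_true] using
          intervalIntegrable_mul_augDeriv hz (continuous_sigComb _ k hz) true 0 t)
    have hG : ∀ t ∈ Ioo 0 T, ∫ s in (0:ℝ)..t, G s = 0 := fun t ht => by
      simpa only [sigComb_succ d k hz, hd0, zero_add, Pi.zero_apply] using h z (hy.extPath τ σ) ht
    have hτb : τ < (τ + T) / 2 := by linarith [hτ.2]
    have hF := eq_zero_of_forall_intervalIntegral_eq_zero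
      (h := fun s => sigComb (fun L => d (false :: L)) k z s
        + sigComb (fun L => d (true :: L)) k z s * σ)
      ((continuous_sigComb _ k hz).add ((continuous_sigComb _ k hz).mul continuous_const)) hτb
      fun t ht => calc
        _ = ∫ s in τ..t, G s := intervalIntegral.integral_congr_ae (ae_of_all _ fun s hs => by
            rw [uIoc_of_le ht.1] at hs
            simp only [G, z, deriv_extPath_of_gt hs.1])
        _ = 0 := by
          rw [← intervalIntegral.integral_interval_sub_left (hGint t) (hGint τ), hG τ hτ,
            hG t ⟨hτ.1.trans_le ht.1, by linarith [ht.2, hτ.2]⟩, sub_zero]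
    have hzy : ∀ L, sigLAux z L τ = sigLAux y L τ := fun L =>
      sigLAux_extPath_of_mem_Icc L (right_mem_Icc.2 hτ.1.le)
    simpa only [sigComb, hzy] using hF
  have hU : ∀ τ ∈ Ioo 0 T, sigComb (fun L => d (false :: L)) k y τ = 0 := fun τ hτ => by
    simpa using key τ hτ 0
  exact ⟨hU, fun τ hτ => by simpa [hU τ hτ] using key τ hτ 1⟩

theorem coeff_eq_zero_of_sigComb_eq_zero (hT : 0 < T)
    (h : ∀ y, IsLip y → EqOn (sigComb d k y) 0 (Ioo 0 T)) {L : List Bool} (hL : L.length ≤ k) :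
    d L = 0 := by
  induction L generalizing d k with
  | nil => exact coeff_nil_eq_zero_of_sigComb_eq_zero hT h
  | cons a M ih =>
    obtain ⟨k, rfl⟩ : ∃ k', k = k' + 1 := Nat.exists_eq_succ_of_ne_zero (by simp at hL; omega)
    have hM : M.length ≤ k := by simpa using hL
    cases a
    · exact ih (fun y hy => (sigComb_cons_eqOn_zero hT h hy).1) hM
    · exact ih (fun y hy => (sigComb_cons_eqOn_zero hT h hy).2) hM

end Independence

def basisCoeff (c0 : ℝ) (c : List Bool → ℝ) : List Bool → ℝ
  | [] => c0
  | true :: M => c M.reverse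
  | false :: _ => 0

theorem sigComb_basisCoeff (K : ℕ) (c0 : ℝ) (c : List Bool → ℝ) (y : ℝ → ℝ) (t : ℝ) :
    sigComb (basisCoeff c0 c) K y t = basisComb K t c0 c y := by
  simp only [sigComb, basisComb, Finset.sum_range_succ', sum_words_zero, sum_words_succ,
    Fintype.sum_bool, basisCoeff, zero_mul, Finset.sum_const_zero, add_zero]
  rw [add_comm, show sigLAux y [] t = 1 from rfl, mul_one]
  congr 1
  refine Finset.sum_congr rfl fun n _ => ?_
  rw [sum_ofFn_eq_sum_words n fun L => c L * sigL (L ++ [true]) y t, ← sum_words_reverse]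
  simp only [sigL_append_singleton, List.reverse_reverse]

theorem basisComb_extPath_zero (K : ℕ) (c0 : ℝ) (c : List Bool → ℝ) {y : ℝ → ℝ} (hy : IsLip y)
    {t T : ℝ} (ht : 0 ≤ t) (htT : t ≤ T) :
    basisComb K T c0 c (extPath y t 0) = basisComb K t c0 c y := by
  have hfreeze : ∀ r, sigLAux (extPath y t 0) (true :: r) T = sigLAux y (true :: r) t := fun r => by
    rw [sigLAux_true_cons_eq_of_deriv_eq_zero (hy.extPath t 0).locallyIntegrable_deriv
      (fun s hs => deriv_extPath_of_gt (by rw [uIoc_of_le htT] at hs; exact hs.1)) r,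
      sigLAux_extPath_of_mem_Icc _ (right_mem_Icc.2 ht)]
  simp only [basisComb, sigL_append_singleton, hfreeze]

theorem basisComb_coeffs_eq_zero {K : ℕ} {T c0 : ℝ} {c : List Bool → ℝ} (hT : 0 < T)
    (h : ∀ y, IsLip y → basisComb K T c0 c y = 0) :
    c0 = 0 ∧ ∀ β : List Bool, β.length < K → c β = 0 := by
  have hcoeff : ∀ L : List Bool, L.length ≤ K → basisCoeff c0 c L = 0 := fun L =>
    coeff_eq_zero_of_sigComb_eq_zero hT fun y hy t ht => by
      rw [sigComb_basisCoeff, ← basisComb_extPath_zero K c0 c hy ht.1.le ht.2.le]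
      exact h _ (hy.extPath t 0)
  refine ⟨hcoeff [] (Nat.zero_le K), fun β hβ => ?_⟩
  simpa [basisCoeff] using hcoeff (true :: β.reverse) (by simpa using hβ)

theorem signature_basis_at_horizon_general (T : ℝ) (hT : 0 < T) (K : ℕ) :
    (∀ α : List Bool, α.length ≤ K →
      ∃ (c0 : ℝ) (c : List Bool → ℝ),
        (∀ y : ℝ → ℝ, IsLip y →
          sigL α y T = c0 + ∑ n ∈ Finset.range K, ∑ v : Fin n → Bool,
            c (List.ofFn v) * sigL (List.ofFn v ++ [true]) y T) ∧
        (∀ (c0' : ℝ) (c' : List Bool → ℝ),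
          (∀ y : ℝ → ℝ, IsLip y →
            sigL α y T = c0' + ∑ n ∈ Finset.range K, ∑ v : Fin n → Bool,
              c' (List.ofFn v) * sigL (List.ofFn v ++ [true]) y T) →
          c0' = c0 ∧ ∀ β : List Bool, β.length < K → c' β = c β)) ∧
    (∀ (c0 : ℝ) (c : List Bool → ℝ),
      (∀ y : ℝ → ℝ, IsLip y →
        c0 + (∑ n ∈ Finset.range K, ∑ v : Fin n → Bool,
          c (List.ofFn v) * sigL (List.ofFn v ++ [true]) y T) = 0) →
      c0 = 0 ∧ ∀ β : List Bool, β.length < K → c β = 0) := by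
  refine ⟨fun α hα => ?_, fun c0 c h => basisComb_coeffs_eq_zero hT h⟩
  obtain ⟨c0, c, hc⟩ := sigLAux_mem_horizonSpan (T := T) (L := α.reverse) (by simpa using hα)
  refine ⟨c0, c, hc, fun c0' c' hc' => ?_⟩
  obtain ⟨h0, h⟩ := basisComb_coeffs_eq_zero (c0 := c0' - c0) (c := c' - c) hT fun y hy => by
    rw [basisComb_sub]
    exact sub_eq_zero.2 ((hc' y hy).symm.trans (hc y hy))
  exact ⟨sub_eq_zero.1 h0, fun β hβ => sub_eq_zero.1 (h β hβ)⟩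

/-- **Basis theorem for signature functionals at the horizon**.
On Lipschitz paths of length exactly `T`, the family consisting of the constant
functional `1` together with `{S_{β1} : |β| < K}` is a basis of the linear span of
`{S_α : |α| ≤ K}`: every `S_α` with `|α| ≤ K` has a unique representation, and the
family is linearly independent. -/
theorem signature_basis_at_horizon (T : ℝ) (hT : 0 < T) (K : ℕ) (hK : 1 ≤ K) :
    (∀ α : List Bool, α.length ≤ K →
      ∃ (c0 : ℝ) (c : List Bool → ℝ),
        (∀ y : ℝ → ℝ, IsLip y →
          sigL α y T = c0 + ∑ n ∈ Finset.range K, ∑ v : Fin n → Bool,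
            c (List.ofFn v) * sigL (List.ofFn v ++ [true]) y T) ∧
        (∀ (c0' : ℝ) (c' : List Bool → ℝ),
          (∀ y : ℝ → ℝ, IsLip y →
            sigL α y T = c0' + ∑ n ∈ Finset.range K, ∑ v : Fin n → Bool,
              c' (List.ofFn v) * sigL (List.ofFn v ++ [true]) y T) →
          c0' = c0 ∧ ∀ β : List Bool, β.length < K → c' β = c β)) ∧
    (∀ (c0 : ℝ) (c : List Bool → ℝ),
      (∀ y : ℝ → ℝ, IsLip y →
        c0 + (∑ n ∈ Finset.range K, ∑ v : Fin n → Bool,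
          c (List.ofFn v) * sigL (List.ofFn v ++ [true]) y T) = 0) →
      c0 = 0 ∧ ∀ β : List Bool, β.length < K → c β = 0) :=
  signature_basis_at_horizon_general T hT K

end
end

section
/- Hermite representation of the weighted signature sum. Let H_k denote the k-th probabilist's Hermite polynomial (H_0 = 1, H_1(x) = x, H_{k+1}(x) = x·H_k(x) − k·H_{k−1}(x)). Then for every t > 0, every Lipschitz path X_t of length t with x_0 = 0, and every integer k ≥ 0: Σ_{α ∈ A_k} (−2)^{−|α|_0} S_α(X_t) = (t^{k/2} / k!) · H_k(x_t / √t), where A_k = {α word over {0,1} : 2|α|_0 + |α|_1 = k}. -/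
open Filter Set Topology MeasureTheory

noncomputable section

/-- The probabilist's Hermite polynomials:
`H_0 = 1`, `H_1(x) = x`, `H_{k+1}(x) = x·H_k(x) − k·H_{k−1}(x)`. -/
noncomputable def hermiteP : ℕ → ℝ → ℝ
  | 0, _ => 1
  | 1, x => x
  | (k+2), x => x * hermiteP (k+1) x - ((k : ℝ) + 1) * hermiteP k x

/-! Splitting words by their last letter, the weighted sum `F_k(u)` over words of weight `k`
satisfies `F_0 = 1`, `F_1(u) = ∫₀ᵘ dy` and `F_{k+2}(u) = ∫₀ᵘ F_{k+1} dy - ½ ∫₀ᵘ F_k ds`. Along the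
path, the heat polynomials `h_k(x, s)` obey the same recursion, because `∂ₓ h_{k+1} = h_k` and
`∂ₛ h_{k+2} = -½ h_k`; so the chain rule and the fundamental theorem of calculus for absolutely
continuous functions give `F_k(u) = h_k(y_u, u)`. Finally `h_k(x, t) = t^{k/2}/k! · H_k(x/√t)`,
since both sides satisfy the three-term recurrence of the Hermite polynomials. -/

/-- The heat polynomials `Σ_{i+2j=k} xⁱ (-s/2)ʲ / (i! j!)`, with generating function
`exp (x z - s z² / 2)`; they solve `∂ₛ h = -(1/2) ∂ₓ² h`. -/
def heatPoly : ℕ → ℝ → ℝ → ℝ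
  | 0, _, _ => 1
  | 1, x, _ => x
  | k + 2, x, s => (x * heatPoly (k + 1) x s - s * heatPoly k x s) / (k + 2)

/-- `∂ₓ heatPoly k`; so `dxHeatPoly (k - 1)` is `∂ₓ² heatPoly k`, also for `k = 0` despite the
truncated subtraction. -/
def dxHeatPoly : ℕ → ℝ → ℝ → ℝ
  | 0 => fun _ _ => 0
  | k + 1 => heatPoly k

theorem heatPoly_succ_zero_zero : ∀ k, heatPoly (k + 1) 0 0 = 0
  | 0 => rfl
  | k + 1 => by simp [heatPoly]

theorem mul_heatPoly_sub_mul_heatPoly (k : ℕ) (x s : ℝ) :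
    x * heatPoly (k + 1) x s - s * heatPoly k x s = (k + 2) * heatPoly (k + 2) x s := by
  rw [heatPoly]; field_simp

theorem mul_dxHeatPoly_sub_mul_dxHeatPoly (k : ℕ) (x s : ℝ) :
    x * dxHeatPoly k x s - s * dxHeatPoly (k - 1) x s = k * dxHeatPoly (k + 1) x s := by
  rcases k with _ | _ | k
  · simp [dxHeatPoly]
  · simp [dxHeatPoly, heatPoly]
  · simp only [dxHeatPoly, Nat.add_sub_cancel]
    push_cast
    linear_combination mul_heatPoly_sub_mul_heatPoly k x s

theorem heatPoly_sq_eq_hermiteP (k : ℕ) (x : ℝ) {σ : ℝ} (hσ : σ ≠ 0) :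
    heatPoly k x (σ ^ 2) = σ ^ k / k.factorial * hermiteP k (x / σ) := by
  induction k using Nat.strong_induction_on with
  | _ k ih =>
    match k, ih with
    | 0, _ => simp [heatPoly, hermiteP]
    | 1, _ => simp [heatPoly, hermiteP, mul_div_cancel₀, hσ]
    | k + 2, ih =>
      rw [heatPoly, hermiteP, ih (k + 1) (by omega), ih k (by omega),
        Nat.factorial_succ (k + 1), Nat.factorial_succ k]
      push_cast
      field_simp
      ring

section Path

variable {y : ℝ → ℝ} {u d : ℝ}

theorem hasDerivAt_heatPoly_comp (hd : HasDerivAt y d u) (k : ℕ) :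
    HasDerivAt (fun s => heatPoly k (y s) s)
      (dxHeatPoly k (y u) u * d - dxHeatPoly (k - 1) (y u) u / 2) u := by
  induction k using Nat.strong_induction_on with
  | _ k ih =>
    match k, ih with
    | 0, _ => simpa [heatPoly, dxHeatPoly] using hasDerivAt_const u (1 : ℝ)
    | 1, _ => simpa [heatPoly, dxHeatPoly] using hd
    | k + 2, ih =>
      have hk := mul_dxHeatPoly_sub_mul_dxHeatPoly k (y u) u
      have hk1 := mul_dxHeatPoly_sub_mul_dxHeatPoly (k + 1) (y u) u
      have h := ((hd.fun_mul (ih (k + 1) (by omega))).fun_sub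
        ((hasDerivAt_id' u).fun_mul (ih k (by omega)))).div_const ((k : ℝ) + 2)
      refine h.congr_deriv ?_
      simp only [Nat.add_sub_cancel, show k + 2 - 1 = k + 1 from rfl, dxHeatPoly.eq_2] at hk hk1 ⊢
      rw [div_eq_iff (by positivity)]
      push_cast at hk1
      linear_combination d * hk1 - hk / 2

theorem absolutelyContinuousOnInterval_heatPoly_comp {a b : ℝ}
    (hy : AbsolutelyContinuousOnInterval y a b) (k : ℕ) :
    AbsolutelyContinuousOnInterval (fun s => heatPoly k (y s) s) a b := by
  have hid : AbsolutelyContinuousOnInterval id a b := contDiffOn_id.absolutelyContinuousOnInterval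
  induction k using Nat.strong_induction_on with
  | _ k ih =>
    match k, ih with
    | 0, _ => exact contDiffOn_const.absolutelyContinuousOnInterval
    | 1, _ => simpa [heatPoly] using hy
    | k + 2, ih =>
      simp only [heatPoly, div_eq_inv_mul]
      exact ((hy.fun_mul (ih (k + 1) (by omega))).sub (hid.fun_mul (ih k (by omega)))).const_mul _

theorem continuousOn_dxHeatPoly_comp {a b : ℝ} (hy : AbsolutelyContinuousOnInterval y a b) :
    ∀ k, ContinuousOn (fun s => dxHeatPoly k (y s) s) (uIcc a b)
  | 0 => continuousOn_const
  | k + 1 => (absolutelyContinuousOnInterval_heatPoly_comp hy k).continuousOn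

theorem integral_deriv_heatPoly_comp {a b : ℝ} (hy : AbsolutelyContinuousOnInterval y a b)
    (k : ℕ) :
    (∫ s in a..b, deriv y s * dxHeatPoly k (y s) s) +
        (-2 : ℝ)⁻¹ * ∫ s in a..b, dxHeatPoly (k - 1) (y s) s =
      heatPoly k (y b) b - heatPoly k (y a) a := by
  rw [← intervalIntegral.integral_const_mul, ← intervalIntegral.integral_add
    (hy.intervalIntegrable_deriv.mul_continuousOn (continuousOn_dxHeatPoly_comp hy k))
    ((continuousOn_dxHeatPoly_comp hy _).intervalIntegrable.const_mul _),
    ← (absolutelyContinuousOnInterval_heatPoly_comp hy k).integral_deriv_eq_sub]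
  refine intervalIntegral.integral_congr_ae ?_
  filter_upwards [hy.ae_differentiableAt] with s hs hs'
  rw [(hasDerivAt_heatPoly_comp (hs (uIoc_subset_uIcc hs')).hasDerivAt k).deriv]
  ring

end Path

section Signature

variable {y : ℝ → ℝ}

theorem intervalIntegrable_letter (hy : ∀ a b, AbsolutelyContinuousOnInterval y a b) (c : Bool)
    (a b : ℝ) :
    IntervalIntegrable (fun s => if c then deriv y s else 1) volume a b := by
  cases c
  · simp
  · simpa using (hy a b).intervalIntegrable_deriv

theorem continuous_sigLAux_s13 (hy : ∀ a b, AbsolutelyContinuousOnInterval y a b) :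
    ∀ l, Continuous (sigLAux y l)
  | [] => continuous_const
  | c :: l => intervalIntegral.continuous_primitive (fun a b =>
      (intervalIntegrable_letter hy c a b).continuousOn_mul
        (continuous_sigLAux_s13 hy l).continuousOn) 0

theorem continuous_sigL (hy : ∀ a b, AbsolutelyContinuousOnInterval y a b) (l : List Bool) :
    Continuous (sigL l y) :=
  continuous_sigLAux_s13 hy l.reverse

theorem sigL_append_singleton_s13 (l : List Bool) (c : Bool) (u : ℝ) :
    sigL (l ++ [c]) y u = ∫ s in (0 : ℝ)..u, sigL l y s * (if c then deriv y s else 1) := by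
  rw [sigL, List.reverse_append]
  rfl

end Signature

theorem List.ofFn_snoc {α : Type*} {n : ℕ} (v : Fin n → α) (a : α) :
    List.ofFn (Fin.snoc v a) = List.ofFn v ++ [a] := by
  rw [List.ofFn_succ']
  simp

theorem Fintype.sum_ofFn_succ {α M : Type*} [Fintype α] [AddCommMonoid M] (n : ℕ)
    (g : List α → M) :
    ∑ v : Fin (n + 1) → α, g (List.ofFn v) = ∑ a, ∑ v : Fin n → α, g (List.ofFn v ++ [a]) := by
  rw [← (Fin.snocEquiv fun _ => α).sum_comp, Fintype.sum_prod_type]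
  simp only [Fin.snocEquiv, Equiv.coe_fn_mk, List.ofFn_snoc]

def wordWeight (l : List Bool) : ℕ := 2 * l.count false + l.count true

theorem wordWeight_append_true (l : List Bool) : wordWeight (l ++ [true]) = wordWeight l + 1 := by
  simp [wordWeight, add_assoc]

theorem wordWeight_append_false (l : List Bool) :
    wordWeight (l ++ [false]) = wordWeight l + 2 := by
  simp [wordWeight, mul_add, add_right_comm]

theorem count_false_append_true (l : List Bool) : (l ++ [true]).count false = l.count false := by
  simp

theorem count_false_append_false (l : List Bool) :
    (l ++ [false]).count false = l.count false + 1 := by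
  simp

theorem length_le_wordWeight (l : List Bool) : l.length ≤ wordWeight l := by
  rw [wordWeight, ← List.count_false_add_count_true l]
  omega

/-- The weight is an integer so that `weightedSigSumOfLength_succ` can lower it without
truncation. -/
def weightedSigSumOfLength (y : ℝ → ℝ) (k : ℤ) (n : ℕ) (u : ℝ) : ℝ :=
  ∑ v : Fin n → Bool with (wordWeight (List.ofFn v) : ℤ) = k,
    ((-2 : ℝ) ^ (List.ofFn v).count false)⁻¹ * sigL (List.ofFn v) y u

theorem weightedSigSumOfLength_zero (y : ℝ → ℝ) (k : ℤ) (u : ℝ) :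
    weightedSigSumOfLength y k 0 u = if k = 0 then 1 else 0 := by
  rw [weightedSigSumOfLength, Finset.sum_filter, Fintype.sum_unique]
  by_cases hk : k = 0 <;> simp [hk, wordWeight, sigL, sigLAux, eq_comm]

theorem weightedSigSumOfLength_eq_zero_of_lt (y : ℝ → ℝ) {k : ℤ} {n : ℕ} (h : k < n) (u : ℝ) :
    weightedSigSumOfLength y k n u = 0 := by
  refine Finset.sum_eq_zero fun v hv => absurd (Finset.mem_filter.1 hv).2 ?_
  have := length_le_wordWeight (List.ofFn v)
  rw [List.length_ofFn] at this
  omega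

theorem weightedSigSumOfLength_succ {y : ℝ → ℝ} (hy : ∀ a b, AbsolutelyContinuousOnInterval y a b)
    (k : ℤ) (n : ℕ) (u : ℝ) :
    weightedSigSumOfLength y k (n + 1) u =
      (∫ s in (0 : ℝ)..u, deriv y s * weightedSigSumOfLength y (k - 1) n s) +
        (-2 : ℝ)⁻¹ * ∫ s in (0 : ℝ)..u, weightedSigSumOfLength y (k - 2) n s := by
  have hS (l : List Bool) : Continuous fun s => ((-2 : ℝ) ^ l.count false)⁻¹ * sigL l y s :=
    continuous_const.mul (continuous_sigL hy l)
  simp only [weightedSigSumOfLength, Finset.mul_sum]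
  rw [intervalIntegral.integral_finsetSum fun _ _ =>
      (hy 0 u).intervalIntegrable_deriv.mul_continuousOn (hS _).continuousOn,
    intervalIntegral.integral_finsetSum fun _ _ => (hS _).intervalIntegrable 0 u,
    Finset.mul_sum, Finset.sum_filter, Fintype.sum_ofFn_succ n fun l =>
      if (wordWeight l : ℤ) = k then ((-2 : ℝ) ^ l.count false)⁻¹ * sigL l y u else 0,
    Fintype.sum_bool]
  simp only [← Finset.sum_filter]
  congr 1 <;> refine Finset.sum_congr (Finset.filter_congr fun v _ => ?_) fun v _ => ?_
  · rw [wordWeight_append_true]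
    omega
  · rw [sigL_append_singleton_s13, count_false_append_true, ← intervalIntegral.integral_const_mul]
    congr 1
    funext s
    rw [if_pos rfl]
    ring
  · rw [wordWeight_append_false]
    omega
  · rw [sigL_append_singleton_s13, count_false_append_false, ← intervalIntegral.integral_const_mul,
      ← intervalIntegral.integral_const_mul]
    congr 1
    funext s
    rw [if_neg Bool.false_ne_true, pow_succ, mul_inv]
    ring

theorem continuous_weightedSigSumOfLength {y : ℝ → ℝ}
    (hy : ∀ a b, AbsolutelyContinuousOnInterval y a b) (k : ℤ) (n : ℕ) :
    Continuous (weightedSigSumOfLength y k n) :=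
  continuous_finsetSum _ fun _ _ => continuous_const.mul (continuous_sigL hy _)

def weightedSigSum (y : ℝ → ℝ) (k : ℕ) (u : ℝ) : ℝ :=
  ∑ n ∈ Finset.range (k + 1), weightedSigSumOfLength y k n u

section WeightedSigSum

variable {y : ℝ → ℝ}

theorem weightedSigSum_zero (u : ℝ) : weightedSigSum y 0 u = 1 := by
  simp [weightedSigSum, weightedSigSumOfLength_zero]

theorem weightedSigSum_one (hy : ∀ a b, AbsolutelyContinuousOnInterval y a b) (u : ℝ) :
    weightedSigSum y 1 u = ∫ s in (0 : ℝ)..u, deriv y s := by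
  simp [weightedSigSum, Finset.sum_range_succ, weightedSigSumOfLength_zero,
    weightedSigSumOfLength_succ hy]

theorem weightedSigSum_add_two (hy : ∀ a b, AbsolutelyContinuousOnInterval y a b) (k : ℕ)
    (u : ℝ) :
    weightedSigSum y (k + 2) u =
      (∫ s in (0 : ℝ)..u, deriv y s * weightedSigSum y (k + 1) s) +
        (-2 : ℝ)⁻¹ * ∫ s in (0 : ℝ)..u, weightedSigSum y k s := by
  have hW := continuous_weightedSigSumOfLength hy
  have hk1 : ((k + 2 : ℕ) : ℤ) - 1 = (k + 1 : ℕ) := by push_cast; ring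
  have hk : ((k + 2 : ℕ) : ℤ) - 2 = k := by push_cast; ring
  have hsum (s : ℝ) :
      weightedSigSum y k s = ∑ n ∈ Finset.range (k + 2), weightedSigSumOfLength y k n s := by
    rw [Finset.sum_range_succ, weightedSigSumOfLength_eq_zero_of_lt y (by omega), add_zero]
    rfl
  have hsum1 (s : ℝ) : weightedSigSum y (k + 1) s =
      ∑ n ∈ Finset.range (k + 2), weightedSigSumOfLength y (k + 1 : ℕ) n s := rfl
  rw [weightedSigSum, Finset.sum_range_succ', weightedSigSumOfLength_zero, if_neg (by omega),
    add_zero]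
  simp only [weightedSigSumOfLength_succ hy, hk1, hk, Finset.sum_add_distrib, ← Finset.mul_sum,
    hsum, hsum1]
  rw [intervalIntegral.integral_finsetSum fun n _ => (hW _ n).intervalIntegrable 0 u]
  congr 1
  simp only [Finset.mul_sum]
  rw [intervalIntegral.integral_finsetSum fun n _ =>
    (hy 0 u).intervalIntegrable_deriv.mul_continuousOn (hW _ n).continuousOn]

theorem weightedSigSum_eq_heatPoly (hy : ∀ a b, AbsolutelyContinuousOnInterval y a b)
    (h0 : y 0 = 0) (k : ℕ) (u : ℝ) :
    weightedSigSum y k u = heatPoly k (y u) u := by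
  induction k using Nat.strong_induction_on generalizing u with
  | _ k ih =>
    match k, ih with
    | 0, _ => exact weightedSigSum_zero u
    | 1, _ => rw [weightedSigSum_one hy, (hy 0 u).integral_deriv_eq_sub, h0, sub_zero]; rfl
    | k + 2, ih =>
      have h := integral_deriv_heatPoly_comp (hy 0 u) (k + 2)
      rw [h0, heatPoly_succ_zero_zero, sub_zero] at h
      simp only [weightedSigSum_add_two hy, ih (k + 1) (by omega), ih k (by omega)]
      exact h

end WeightedSigSum

/-- **Hermite representation of the weighted signature sum.**
For every `t > 0`, every Lipschitz path `X_t` with `x_0 = 0` and every `k ≥ 0`: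
`Σ_{α ∈ A_k} (−2)^{−|α|_0} S_α(X_t) = (t^{k/2}/k!) · H_k(x_t/√t)`, where
`A_k = {α : 2|α|_0 + |α|_1 = k}`. -/
theorem hermite_signature_sum (t : ℝ) (ht : 0 < t)
    (y : ℝ → ℝ) (hy : IsLip y) (h0 : y 0 = 0) (k : ℕ) :
    (∑ n ∈ Finset.range (k + 1),
      ∑ v ∈ Finset.univ.filter (fun v : Fin n → Bool =>
          2 * (List.ofFn v).count false + (List.ofFn v).count true = k),
        ((-2 : ℝ) ^ ((List.ofFn v).count false))⁻¹ * sigL (List.ofFn v) y t)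
      = t ^ ((k : ℝ) / 2) / (Nat.factorial k : ℝ) * hermiteP k (y t / Real.sqrt t) := by
  obtain ⟨C, hC⟩ := hy
  have hac : ∀ a b, AbsolutelyContinuousOnInterval y a b := fun a b =>
    hC.lipschitzOnWith.absolutelyContinuousOnInterval
  calc _ = weightedSigSum y k t := by
        simp only [weightedSigSum, weightedSigSumOfLength, wordWeight, Nat.cast_inj]
    _ = heatPoly k (y t) (Real.sqrt t ^ 2) := by
        rw [weightedSigSum_eq_heatPoly hac h0, Real.sq_sqrt ht.le]
    _ = _ := by
        rw [heatPoly_sq_eq_hermiteP k _ (Real.sqrt_pos.2 ht).ne', Real.rpow_div_two_eq_sqrt _ ht.le,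
          Real.rpow_natCast]

end
end

section
/- Vanishing of functionals with identically vanishing integral. Fix T > 0. Let f be a real-valued functional defined on Lipschitz paths of every length t ∈ [0,T] that is continuous with respect to the metric d_Λ. Suppose that ∫_0^T f(X_t) x'(t) dt = 0 for every Lipschitz path X_T of length T, where X_t denotes the restriction of X_T to [0,t]. Then f(X_t) = 0 for every Lipschitz path X_t of every length t ∈ [0,T]. -/
/-!
Suppose `f(X_t) = c` for a Lipschitz path stopped at time `t < T`. Adding to it a ramp that
rises with slope one on `[t, t + ε]` and is constant elsewhere changes the integrand of the
hypothesis only on `[t, t + ε]`, where the stopped path has derivative `0` and the perturbed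
one derivative `1`; since both integrals vanish, `∫_t^{t+ε} f(X^ε_s) ds = 0`. The perturbed
path stays within `d_Λ`-distance `2ε` of `X_t`, so by continuity the integrand is close to
`c`, forcing `c = 0`. The endpoint `t = T` follows by continuity of `s ↦ f(X_s)`.
-/

open Filter Set Topology MeasureTheory

noncomputable section

/-- The metric `d_Λ` between the path `x` of length `t` and the path `y` of length `s`:
`|t − s| + sup_{0 ≤ u ≤ t ∨ s} |x_{u∧t} − y_{u∧s}|`. -/
noncomputable def dLam (t : ℝ) (x : ℝ → ℝ) (s : ℝ) (y : ℝ → ℝ) : ℝ :=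
  |t - s| + sSup ((fun u => |x (min u t) - y (min u s)|) '' Set.Icc 0 (max t s))

def IsNonanticipative (T : ℝ) (f : ℝ → (ℝ → ℝ) → ℝ) : Prop :=
  ∀ t ∈ Icc (0:ℝ) T, ∀ x y : ℝ → ℝ, (∀ s ∈ Icc (0:ℝ) t, x s = y s) → f t x = f t y

def DLamContinuous (T : ℝ) (f : ℝ → (ℝ → ℝ) → ℝ) : Prop :=
  ∀ t ∈ Icc (0:ℝ) T, ∀ x : ℝ → ℝ, IsLip x → ∀ ε > 0, ∃ δ > 0,
    ∀ s ∈ Icc (0:ℝ) T, ∀ y : ℝ → ℝ, IsLip y → dLam t x s y < δ → |f s y - f t x| < ε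

def stopPath (x : ℝ → ℝ) (t : ℝ) : ℝ → ℝ := fun u => x (min u t)

def ramp (t ε : ℝ) : ℝ → ℝ := fun u => min (max (u - t) 0) ε

lemma dLam_le {t s a b : ℝ} {x y : ℝ → ℝ} (hts : |t - s| ≤ a) (hb : 0 ≤ b)
    (hxy : ∀ u ∈ Icc 0 (max t s), |x (min u t) - y (min u s)| ≤ b) :
    dLam t x s y ≤ a + b :=
  add_le_add hts (Real.sSup_le (by rintro _ ⟨u, hu, rfl⟩; exact hxy u hu) hb)

lemma LipschitzWith.dLam_self_le {D : NNReal} {z : ℝ → ℝ} (hz : LipschitzWith D z)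
    (t s : ℝ) : dLam t z s z ≤ (1 + D) * |t - s| := by
  have hle := dLam_le le_rfl (by positivity : 0 ≤ (D : ℝ) * |t - s|) fun u _ => by
    calc |z (min u t) - z (min u s)| ≤ D * |min u t - min u s| := by
          simpa [Real.dist_eq] using hz.dist_le_mul (min u t) (min u s)
      _ ≤ D * |t - s| := mul_le_mul_of_nonneg_left
          (by simpa using abs_min_sub_min_le_max u t u s) D.coe_nonneg
  linarith

lemma DLamContinuous.continuousOn {T : ℝ} {f : ℝ → (ℝ → ℝ) → ℝ} (hf : DLamContinuous T f)
    {z : ℝ → ℝ} (hz : IsLip z) : ContinuousOn (fun s => f s z) (Icc 0 T) := by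
  obtain ⟨D, hD⟩ := hz
  rw [Metric.continuousOn_iff]
  intro t ht η hη
  obtain ⟨δ, hδ, hfδ⟩ := hf t ht z ⟨D, hD⟩ η hη
  refine ⟨δ / (1 + D), by positivity, fun s hs hst => ?_⟩
  rw [Real.dist_eq] at hst ⊢
  refine hfδ s hs z ⟨D, hD⟩ ?_
  calc dLam t z s z ≤ (1 + D) * |t - s| := hD.dLam_self_le t s
    _ < (1 + D) * (δ / (1 + D)) := by gcongr; rwa [abs_sub_comm]
    _ = δ := by field_simp

lemma LipschitzWith.intervalIntegrable_deriv {C : NNReal} {z : ℝ → ℝ} (hz : LipschitzWith C z)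
    (a b : ℝ) : IntervalIntegrable (deriv z) volume a b :=
  IntegrableOn.intervalIntegrable <| Measure.integrableOn_of_bounded
    isCompact_uIcc.measure_lt_top.ne (measurable_deriv z).aestronglyMeasurable
    (ae_of_all _ fun _ => norm_deriv_le_of_lipschitz hz)

lemma DLamContinuous.intervalIntegrable_mul_deriv {T : ℝ} {f : ℝ → (ℝ → ℝ) → ℝ}
    (hf : DLamContinuous T f) {C : NNReal} {z : ℝ → ℝ} (hz : LipschitzWith C z) {a b : ℝ}
    (ha : a ∈ Icc 0 T) (hb : b ∈ Icc 0 T) :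
    IntervalIntegrable (fun s => f s z * deriv z s) volume a b :=
  (hz.intervalIntegrable_deriv a b).continuousOn_mul
    ((hf.continuousOn ⟨C, hz⟩).mono (uIcc_subset_Icc ha hb))

section stopPath

variable {x : ℝ → ℝ} {t : ℝ}

lemma stopPath_of_le {u : ℝ} (hu : u ≤ t) : stopPath x t u = x u := by
  simp [stopPath, hu]

lemma stopPath_min_of_le {s : ℝ} (u : ℝ) (hts : t ≤ s) :
    stopPath x t (min u s) = x (min u t) := by
  simp [stopPath, min_assoc, min_eq_right hts]

lemma LipschitzWith.stopPath {C : NNReal} (hx : LipschitzWith C x) (t : ℝ) :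
    LipschitzWith C (stopPath x t) := by
  have h := hx.comp (LipschitzWith.id.min_const t)
  rwa [mul_one] at h

lemma stopPath_eventuallyEq_of_lt {s : ℝ} (hs : t < s) :
    stopPath x t =ᶠ[𝓝 s] fun _ => x t := by
  filter_upwards [Ioi_mem_nhds hs] with u hu
  simp [stopPath, (mem_Ioi.1 hu).le]

lemma deriv_stopPath_of_lt {s : ℝ} (hs : t < s) : deriv (stopPath x t) s = 0 := by
  rw [(stopPath_eventuallyEq_of_lt hs).deriv_eq, deriv_const]

end stopPath

section ramp

variable {t ε u s : ℝ}

lemma ramp_of_le (hε : 0 ≤ ε) (hu : u ≤ t) : ramp t ε u = 0 := by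
  simp [ramp, hu, hε]

lemma ramp_mem_Icc (hε : 0 ≤ ε) (u : ℝ) : ramp t ε u ∈ Icc 0 ε :=
  ⟨le_min (le_max_right _ _) hε, min_le_right _ _⟩

lemma lipschitzWith_ramp (t ε : ℝ) : LipschitzWith 1 (ramp t ε) :=
  ((IsometryEquiv.subRight t).isometry.lipschitz.max_const 0).min_const ε

lemma deriv_ramp_of_mem_Ioo (hs : s ∈ Ioo t (t + ε)) : deriv (ramp t ε) s = 1 := by
  have heq : ramp t ε =ᶠ[𝓝 s] fun u => u - t := by
    filter_upwards [Ioo_mem_nhds hs.1 hs.2] with u hu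
    simp [ramp, hu.1.le, (sub_le_iff_le_add'.2 hu.2.le)]
  rw [heq.deriv_eq]
  simp

lemma deriv_ramp_of_lt (hs : t + ε < s) : deriv (ramp t ε) s = 0 := by
  have heq : ramp t ε =ᶠ[𝓝 s] fun _ => ε := by
    filter_upwards [Ioi_mem_nhds hs] with u hu
    have hεu : ε ≤ u - t := by linarith [mem_Ioi.1 hu]
    simp [ramp, le_max_of_le_left hεu]
  rw [heq.deriv_eq, deriv_const]

end ramp

section bump

variable {x : ℝ → ℝ} {t ε s : ℝ}

lemma stopPath_add_ramp_of_le (hε : 0 ≤ ε) {u : ℝ} (hu : u ≤ t) :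
    (stopPath x t + ramp t ε) u = stopPath x t u := by
  simp [ramp_of_le hε hu]

lemma deriv_stopPath_add_ramp_of_lt (hε : 0 ≤ ε) (hs : s < t) :
    deriv (stopPath x t + ramp t ε) s = deriv (stopPath x t) s := by
  apply Filter.EventuallyEq.deriv_eq
  filter_upwards [Iio_mem_nhds hs] with u hu
  exact stopPath_add_ramp_of_le hε (mem_Iio.1 hu).le

lemma deriv_stopPath_add_ramp_of_gt (hs : t < s) :
    deriv (stopPath x t + ramp t ε) s = deriv (ramp t ε) s := by
  have heq : stopPath x t + ramp t ε =ᶠ[𝓝 s] fun u => x t + ramp t ε u := by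
    filter_upwards [stopPath_eventuallyEq_of_lt (x := x) hs] with u hu
    simp [hu]
  rw [heq.deriv_eq, deriv_const_add]

lemma dLam_stopPath_add_ramp_le (hε : 0 ≤ ε) (hts : t ≤ s) (hst : s ≤ t + ε) :
    dLam t (stopPath x t) s (stopPath x t + ramp t ε) ≤ ε + ε := by
  refine dLam_le ?_ hε fun u _ => ?_
  · rw [abs_sub_comm, abs_of_nonneg (sub_nonneg.2 hts)]
    linarith
  simp only [Pi.add_apply, stopPath_min_of_le u le_rfl, stopPath_min_of_le u hts]
  rw [sub_add_cancel_left, abs_neg, abs_of_nonneg (ramp_mem_Icc hε _).1]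
  exact (ramp_mem_Icc hε _).2

end bump

lemma integral_mul_deriv_stopPath_add_ramp_sub {T : ℝ} {f : ℝ → (ℝ → ℝ) → ℝ}
    (hwd : IsNonanticipative T f) (hf : DLamContinuous T f) {C : NNReal} {x : ℝ → ℝ}
    (hx : LipschitzWith C x) {t ε : ℝ} (ht : 0 ≤ t) (hε : 0 < ε) (htε : t + ε ≤ T) :
    (∫ s in (0:ℝ)..T, f s (stopPath x t + ramp t ε) * deriv (stopPath x t + ramp t ε) s) -
      (∫ s in (0:ℝ)..T, f s (stopPath x t) * deriv (stopPath x t) s) =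
      ∫ s in t..t + ε, f s (stopPath x t + ramp t ε) := by
  set g := fun s => f s (stopPath x t + ramp t ε) * deriv (stopPath x t + ramp t ε) s -
    f s (stopPath x t) * deriv (stopPath x t) s
  have hX : LipschitzWith (C + 1) (stopPath x t + ramp t ε) :=
    (hx.stopPath t).add (lipschitzWith_ramp t ε)
  have hg : ∀ {a b : ℝ}, a ∈ Icc 0 T → b ∈ Icc 0 T → IntervalIntegrable g volume a b :=
    fun ha hb => (hf.intervalIntegrable_mul_deriv hX ha hb).sub
      (hf.intervalIntegrable_mul_deriv (hx.stopPath t) ha hb)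
  have h_left : ∫ s in (0:ℝ)..t, g s = 0 := by
    refine (intervalIntegral.integral_congr_Ioo_of_le ht fun s hs => ?_).trans
      intervalIntegral.integral_zero
    have hfX : f s (stopPath x t + ramp t ε) = f s (stopPath x t) :=
      hwd s ⟨hs.1.le, by linarith [hs.2]⟩ _ _ fun u hu =>
        stopPath_add_ramp_of_le hε.le (hu.2.trans hs.2.le)
    simp [g, hfX, deriv_stopPath_add_ramp_of_lt hε.le hs.2]
  have h_mid : ∫ s in t..t + ε, g s = ∫ s in t..t + ε, f s (stopPath x t + ramp t ε) :=
    intervalIntegral.integral_congr_Ioo_of_le (by linarith) fun s hs => by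
      simp [g, deriv_stopPath_of_lt hs.1, deriv_stopPath_add_ramp_of_gt hs.1,
        deriv_ramp_of_mem_Ioo hs]
  have h_right : ∫ s in t + ε..T, g s = 0 := by
    refine (intervalIntegral.integral_congr_Ioo_of_le htε fun s hs => ?_).trans
      intervalIntegral.integral_zero
    have hts : t < s := by linarith [hs.1]
    simp [g, deriv_stopPath_of_lt hts, deriv_stopPath_add_ramp_of_gt hts,
      deriv_ramp_of_lt hs.1]
  have h0 : (0:ℝ) ∈ Icc 0 T := ⟨le_rfl, by linarith⟩
  have ht' : t ∈ Icc 0 T := ⟨ht, by linarith⟩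
  have htε' : t + ε ∈ Icc 0 T := ⟨by linarith, htε⟩
  have hT : T ∈ Icc 0 T := ⟨by linarith, le_rfl⟩
  have hsplit : ∫ s in (0:ℝ)..T, g s =
      (∫ s in (0:ℝ)..t, g s) + (∫ s in t..t + ε, g s) + ∫ s in t + ε..T, g s := by
    rw [intervalIntegral.integral_add_adjacent_intervals (hg h0 ht') (hg ht' htε'),
      intervalIntegral.integral_add_adjacent_intervals (hg h0 htε') (hg htε' hT)]
  rw [← intervalIntegral.integral_sub (hf.intervalIntegrable_mul_deriv hX h0 hT)
    (hf.intervalIntegrable_mul_deriv (hx.stopPath t) h0 hT)]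
  exact hsplit.trans (by rw [h_left, h_mid, h_right, zero_add, add_zero])

lemma apply_stopPath_eq_zero {T : ℝ} {f : ℝ → (ℝ → ℝ) → ℝ}
    (hwd : IsNonanticipative T f) (hf : DLamContinuous T f)
    (hint : ∀ x : ℝ → ℝ, IsLip x → (∫ t in (0:ℝ)..T, f t x * deriv x t) = 0)
    {t : ℝ} (ht : t ∈ Ico 0 T) {C : NNReal} {x : ℝ → ℝ} (hx : LipschitzWith C x) :
    f t (stopPath x t) = 0 := by
  set c := f t (stopPath x t)
  refine abs_nonpos_iff.1 (le_of_forall_gt_imp_ge_of_dense fun η hη => ?_)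
  obtain ⟨δ, hδ, hfδ⟩ := hf t (Ico_subset_Icc_self ht) _ ⟨C, hx.stopPath t⟩ η hη
  set ε := min (T - t) (δ / 3)
  have hε : 0 < ε := lt_min (sub_pos.2 ht.2) (by positivity)
  have htε : t + ε ≤ T := by linarith [min_le_left (T - t) (δ / 3)]
  have hεδ : ε + ε < δ := by linarith [min_le_right (T - t) (δ / 3)]
  set X := stopPath x t + ramp t ε
  have hX : IsLip X := ⟨C + 1, (hx.stopPath t).add (lipschitzWith_ramp t ε)⟩
  have hzero : ∫ s in t..t + ε, f s X = 0 := by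
    rw [← integral_mul_deriv_stopPath_add_ramp_sub hwd hf hx ht.1 hε htε, hint _ hX,
      hint _ ⟨C, hx.stopPath t⟩, sub_zero]
  have hclose : ∀ s ∈ uIoc t (t + ε), ‖f s X - c‖ ≤ η := fun s hs => by
    rw [uIoc_of_le (by linarith)] at hs
    exact (hfδ s ⟨by linarith [ht.1, hs.1], hs.2.trans htε⟩ X hX
      ((dLam_stopPath_add_ramp_le hε.le hs.1.le hs.2).trans_lt hεδ)).le
  have hXint : IntervalIntegrable (fun s => f s X) volume t (t + ε) :=
    ((hf.continuousOn hX).mono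
      (uIcc_subset_Icc ⟨ht.1, ht.2.le⟩ ⟨by linarith [ht.1], htε⟩)).intervalIntegrable
  have hbound := intervalIntegral.norm_integral_le_of_norm_le_const hclose
  rw [intervalIntegral.integral_sub hXint intervalIntegrable_const, hzero,
    intervalIntegral.integral_const, add_sub_cancel_left, smul_eq_mul, zero_sub, norm_neg,
    norm_mul, Real.norm_of_nonneg hε.le, abs_of_pos hε, Real.norm_eq_abs] at hbound
  exact le_of_mul_le_mul_left (by linarith) hε

/-- **Vanishing of functionals with identically vanishing integral.**
Let `f` be a functional on Lipschitz paths of every length `t ∈ [0,T]` (encoded as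
`f t x`, depending only on `x|_{[0,t]}`) that is continuous w.r.t. `d_Λ`. If
`∫_0^T f(X_t) x'(t) dt = 0` for every Lipschitz path `X_T` of length `T`, then
`f(X_t) = 0` for every Lipschitz path of every length `t ∈ [0,T]`. -/
theorem vanishing_functional (T : ℝ) (hT : 0 < T) (f : ℝ → (ℝ → ℝ) → ℝ)
    (hwd : ∀ t ∈ Set.Icc (0:ℝ) T, ∀ x y : ℝ → ℝ,
      (∀ s ∈ Set.Icc (0:ℝ) t, x s = y s) → f t x = f t y)
    (hcont : ∀ t ∈ Set.Icc (0:ℝ) T, ∀ x : ℝ → ℝ, IsLip x → ∀ ε > 0, ∃ δ > 0,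
      ∀ s ∈ Set.Icc (0:ℝ) T, ∀ y : ℝ → ℝ, IsLip y → dLam t x s y < δ →
        |f s y - f t x| < ε)
    (hint : ∀ x : ℝ → ℝ, IsLip x → (∫ t in (0:ℝ)..T, f t x * deriv x t) = 0) :
    ∀ t ∈ Set.Icc (0:ℝ) T, ∀ x : ℝ → ℝ, IsLip x → f t x = 0 := by
  intro t ht x hx
  have hzero : EqOn (fun s => f s x) 0 (Ico 0 T) := fun s hs => by
    obtain ⟨C, hC⟩ := hx
    show f s x = 0
    rw [hwd s (Ico_subset_Icc_self hs) x (stopPath x s) fun u hu => (stopPath_of_le hu.2).symm]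
    exact apply_stopPath_eq_zero hwd hcont hint hs hC
  exact hzero.of_subset_closure (DLamContinuous.continuousOn hcont hx) continuousOn_const
    Ico_subset_Icc_self (closure_Ico hT.ne).ge ht
end
end
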